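/- Let O be a complete discrete valuation ring with maximal ideal m and fraction field F, and let n ≥ 1. Let M₁, M₂ ∈ Mₙ(O) be matrices with M₁ − Y ∈ Mₙ(m) and M₂ − Y ∈ Mₙ(m) (all entries in m). If M₁ and M₂ have the same characteristic polynomial, then there exists g ∈ GLₙ(O) with g − 1 ∈ Mₙ(m) such that g M₁ g⁻¹ = M₂. -/

import Mathlib

/-!
Reduction modulo `m` sends `M₁` and `M₂` to `Y`, for which the last basis vector `e` is cyclic:
the Krylov matrix `(e, Y e, …, Y^{n-1} e)` is the antidiagonal permutation matrix. Hence the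
Krylov matrices `K₁`, `K₂` of `M₁`, `M₂` at `e` are invertible over `O` and congruent modulo `m`.
By Cayley–Hamilton `Mᵢ Kᵢ = Kᵢ C`, where `C` is the companion matrix of the common characteristic
polynomial, so `g = K₂ K₁⁻¹` conjugates `M₁` to `M₂` and reduces to `1`.
-/

open IsLocalRing

def Ymat (n : ℕ) (R : Type*) [CommRing R] : Matrix (Fin n) (Fin n) R :=
  fun i j => if (j : ℕ) = (i : ℕ) + 1 then 1 else 0

open Polynomial

theorem Units.map_val_mul_inv_eq_one {M N F : Type*} [Monoid M] [Monoid N] [FunLike F M N]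
    [MonoidHomClass F M N] (φ : F) {u₁ u₂ : Mˣ} (h : φ u₁ = φ u₂) : φ ↑(u₂ * u₁⁻¹) = 1 := by
  rw [Units.val_mul, map_mul, ← h, ← map_mul, Units.mul_inv, map_one]

namespace Matrix

theorem isUnit_permMatrix {ι : Type*} [Fintype ι] [DecidableEq ι] (R : Type*) [CommRing R]
    (σ : Equiv.Perm ι) : IsUnit (σ.permMatrix R) := by
  rw [isUnit_iff_isUnit_det, det_permutation]
  exact (Equiv.Perm.sign σ).isUnit.map (Int.castRingHom R)

section LocalRing

variable {R : Type*} [CommRing R] [IsLocalRing R]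

theorem isUnit_map_residue_iff {ι : Type*} [Fintype ι] [DecidableEq ι] (A : Matrix ι ι R) :
    IsUnit (A.map (residue R)) ↔ IsUnit A := by
  rw [isUnit_iff_isUnit_det, isUnit_iff_isUnit_det, ← RingHom.mapMatrix_apply, ← RingHom.map_det,
    isUnit_map_iff]

theorem map_residue_eq_map_residue_iff {ι κ : Type*} (A B : Matrix ι κ R) :
    A.map (residue R) = B.map (residue R) ↔ ∀ i j, (A - B) i j ∈ maximalIdeal R := by
  simp only [← Matrix.ext_iff, map_apply, sub_apply, ← residue_eq_zero_iff, map_sub, sub_eq_zero]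

end LocalRing

variable {R : Type*} [CommRing R] {n : ℕ}

def krylov (M : Matrix (Fin n) (Fin n) R) (v : Fin n → R) : Matrix (Fin n) (Fin n) R :=
  of fun i j => (M ^ (j : ℕ) *ᵥ v) i

def companion (p : R[X]) : Matrix (Fin n) (Fin n) R :=
  of fun i j => if (j : ℕ) + 1 = n then -p.coeff i else if (i : ℕ) = j + 1 then 1 else 0

theorem pow_eq_neg_sum_coeff_charpoly_smul_pow [Nontrivial R] (M : Matrix (Fin n) (Fin n) R) :
    M ^ n = -∑ j ∈ Finset.range n, M.charpoly.coeff j • M ^ j := by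
  have h := M.aeval_self_charpoly
  rw [M.charpoly_monic.as_sum, charpoly_natDegree_eq_dim, Fintype.card_fin] at h
  simpa [eq_neg_iff_add_eq_zero, Algebra.smul_def] using h

theorem mul_krylov [Nontrivial R] (M : Matrix (Fin n) (Fin n) R) (v : Fin n → R) :
    M * krylov M v = krylov M v * companion M.charpoly := by
  ext i k
  have hl : (M * krylov M v) i k = (M ^ ((k : ℕ) + 1) *ᵥ v) i := by
    rw [pow_succ', ← mulVec_mulVec]; rfl
  rw [hl, mul_apply]
  simp only [krylov, companion, of_apply]
  rw [Fin.sum_univ_eq_sum_range (fun j => (M ^ j *ᵥ v) i *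
    (if (k : ℕ) + 1 = n then -M.charpoly.coeff j else if j = (k : ℕ) + 1 then 1 else 0))]
  split_ifs with hk
  · rw [hk, pow_eq_neg_sum_coeff_charpoly_smul_pow, neg_mulVec, sum_mulVec]
    simp [Finset.sum_apply, smul_mulVec, mul_comm]
  · simp only [mul_ite, mul_one, mul_zero, Finset.sum_ite_eq', Finset.mem_range, left_eq_ite_iff,
      not_lt]
    omega

theorem krylov_map {S : Type*} [CommRing S] (f : R →+* S) (M : Matrix (Fin n) (Fin n) R)
    (v : Fin n → R) : (krylov M v).map f = krylov (M.map f) (f ∘ v) := by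
  ext i j
  simp [krylov, RingHom.map_mulVec, ← Matrix.map_pow]

end Matrix

section Ymat

variable {R : Type*} [CommRing R] {n : ℕ}

theorem Ymat_map {S : Type*} [CommRing S] (f : R →+* S) : (Ymat n R).map f = Ymat n S := by
  ext i j
  simp [Ymat, apply_ite f]

theorem Ymat_pow_apply (j : ℕ) (i k : Fin n) :
    (Ymat n R ^ j) i k = if (k : ℕ) = i + j then 1 else 0 := by
  induction j generalizing k with
  | zero => simp [Matrix.one_apply, Fin.ext_iff, eq_comm]
  | succ j ih =>
    rw [pow_succ, Matrix.mul_apply]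
    simp only [ih, Ymat]
    rw [Fin.sum_univ_eq_sum_range (fun b => (if b = (i : ℕ) + j then (1 : R) else 0) *
      (if (k : ℕ) = b + 1 then 1 else 0))]
    simp only [ite_mul, one_mul, zero_mul, Finset.sum_ite_eq', Finset.mem_range]
    rw [← ite_and]
    exact if_congr (by omega) rfl rfl

theorem krylov_Ymat_single_last :
    Matrix.krylov (Ymat (n + 1) R) (Pi.single (Fin.last n) 1) = Fin.revPerm.permMatrix R := by
  ext i j
  rw [Matrix.krylov, Matrix.of_apply, Matrix.mulVec_single_one, Matrix.col_apply, Ymat_pow_apply]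
  exact if_congr (by simp [Fin.ext_iff]; omega) rfl rfl

end Ymat

theorem stmt5_general {O : Type*} [CommRing O] [IsDomain O] [IsDiscreteValuationRing O]
    (n : ℕ) (M₁ M₂ : Matrix (Fin n) (Fin n) O)
    (hM₁ : ∀ i j : Fin n, (M₁ - Ymat n O) i j ∈ maximalIdeal O)
    (hM₂ : ∀ i j : Fin n, (M₂ - Ymat n O) i j ∈ maximalIdeal O)
    (hchar : M₁.charpoly = M₂.charpoly) :
    ∃ g : GL (Fin n) O,
      (∀ i j : Fin n,
        ((g : Matrix (Fin n) (Fin n) O) - 1) i j ∈ maximalIdeal O) ∧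
      (g : Matrix (Fin n) (Fin n) O) * M₁ *
          ((g⁻¹ : GL (Fin n) O) : Matrix (Fin n) (Fin n) O) = M₂ := by
  cases n with
  | zero => exact ⟨1, fun i => i.elim0, Subsingleton.elim _ _⟩
  | succ n =>
  let e : Fin (n + 1) → O := Pi.single (Fin.last n) 1
  have hred (M : Matrix (Fin (n + 1)) (Fin (n + 1)) O)
      (hM : ∀ i j, (M - Ymat (n + 1) O) i j ∈ maximalIdeal O) :
      (M.krylov e).map (residue O) = Fin.revPerm.permMatrix _ := by
    rw [Matrix.krylov_map, (Matrix.map_residue_eq_map_residue_iff _ _).2 hM, Ymat_map,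
      ← krylov_Ymat_single_last]
    congr 1
    ext i
    simp [e, Pi.single_apply, apply_ite (residue O)]
  obtain ⟨u₁, hu₁⟩ := (Matrix.isUnit_map_residue_iff _).1
    (hred M₁ hM₁ ▸ Matrix.isUnit_permMatrix _ _)
  obtain ⟨u₂, hu₂⟩ := (Matrix.isUnit_map_residue_iff _).1
    (hred M₂ hM₂ ▸ Matrix.isUnit_permMatrix _ _)
  refine ⟨u₂ * u₁⁻¹, (Matrix.map_residue_eq_map_residue_iff _ _).1 ?_, ?_⟩
  · rw [Matrix.map_one _ (map_zero _) (map_one _)]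
    exact Units.map_val_mul_inv_eq_one (residue O).mapMatrix
      (by simp only [RingHom.mapMatrix_apply, hu₁, hu₂, hred M₁ hM₁, hred M₂ hM₂])
  · have h₁ : SemiconjBy (u₁ : Matrix _ _ O) (Matrix.companion M₁.charpoly) M₁ := by
      rw [SemiconjBy, hu₁, Matrix.mul_krylov]
    have h₂ : SemiconjBy (u₂ : Matrix _ _ O) (Matrix.companion M₁.charpoly) M₂ := by
      rw [SemiconjBy, hu₂, hchar, Matrix.mul_krylov]
    rw [Units.mul_inv_eq_iff_eq_mul, Units.val_mul]
    exact h₂.mul_left h₁.units_inv_symm_left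

/-- Let `O` be a complete discrete valuation ring with maximal ideal
`m` and let `n ≥ 1`. If `M₁, M₂ ∈ Mₙ(O)` satisfy `M₁ - Y, M₂ - Y ∈ Mₙ(m)` and have the
same characteristic polynomial, then there exists `g ∈ GLₙ(O)` with `g - 1 ∈ Mₙ(m)`
such that `g M₁ g⁻¹ = M₂`. -/
theorem stmt5 {O : Type*} [CommRing O] [IsDomain O] [IsDiscreteValuationRing O]
    [IsAdicComplete (maximalIdeal O) O]
    (n : ℕ) (hn : 1 ≤ n) (M₁ M₂ : Matrix (Fin n) (Fin n) O)
    (hM₁ : ∀ i j : Fin n, (M₁ - Ymat n O) i j ∈ maximalIdeal O)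
    (hM₂ : ∀ i j : Fin n, (M₂ - Ymat n O) i j ∈ maximalIdeal O)
    (hchar : M₁.charpoly = M₂.charpoly) :
    ∃ g : GL (Fin n) O,
      (∀ i j : Fin n,
        ((g : Matrix (Fin n) (Fin n) O) - 1) i j ∈ maximalIdeal O) ∧
      (g : Matrix (Fin n) (Fin n) O) * M₁ *
          ((g⁻¹ : GL (Fin n) O) : Matrix (Fin n) (Fin n) O) = M₂ :=
  stmt5_general n M₁ M₂ hM₁ hM₂ hchar
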